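/- arXiv:2510.25250 — 3 statements merged into one kernel-verified Lean document; each statement's English description precedes it below -/
import Mathlib

section
/- For all integers r ≥ 0 and all n ≥ 0, a_{2^r}(2n+1) ≡ 0 (mod 2^r). -/
/-- `a k n` is the number of partitions of `n` in which even parts appear in a single
color while odd parts may appear in any one of `k` colors; equivalently, it is the
coefficient of `q^n` in `∏_{i ≥ 1} (1 - q^{2i})^{k-1} / ∏_{i ≥ 1} (1 - q^i)^k` over `ℤ`.
Each factor `(1 - q^i)` has constant term `1`, hence is a unit in `ℤ⟦q⟧`, and its
inverse is given by `Ring.inverse`.  Since every factor with index `i > n` is of the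
form `1 + O(q^{n+1})` and so does not affect the coefficient of `q^n`, the infinite
products may be truncated at `i = n + 1`. -/
noncomputable def a (k n : ℕ) : ℤ :=
  PowerSeries.coeff n
    ((∏ i ∈ Finset.range (n + 1),
        ((1 : PowerSeries ℤ) - (PowerSeries.X : PowerSeries ℤ) ^ (2 * (i + 1))) ^ (k - 1)) *
      ∏ i ∈ Finset.range (n + 1),
        (Ring.inverse ((1 : PowerSeries ℤ) - (PowerSeries.X : PowerSeries ℤ) ^ (i + 1))) ^ k)

/-! With `k = 2^r`, the generating function is `A⁻¹ (A B)^k`, where `A = ∏ (1 - q^{2i})` is even,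
i.e. fixed by `q ↦ -q`. Every power series satisfies `f(q) ≡ f(-q) (mod 2)`, hence
`f^2 ≡ f(q) f(-q) (mod 2)`, and raising to the power `2^{r-1}` gives `f^{2^r} ≡ g (mod 2^r)` with
`g = (f(q) f(-q))^{2^{r-1}}` even. So the generating function is congruent modulo `2^r` to the even
series `A⁻¹ g`, whose odd coefficients vanish over `ℤ`. -/

open PowerSeries Finset

theorem map_ringInverse_of_isUnit {M N F : Type*} [MonoidWithZero M] [MonoidWithZero N]
    [FunLike F M N] [MonoidHomClass F M N] (f : F) {x : M} (hx : IsUnit x) :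
    f (Ring.inverse x) = Ring.inverse (f x) := by
  rw [← one_mul (Ring.inverse (f x)), Ring.eq_mul_inverse_iff_mul_eq _ _ _ (hx.map f), ← map_mul,
    Ring.inverse_mul_cancel x hx, map_one]

theorem pow_pred_mul_pow_eq_ringInverse_mul {M : Type*} [CommMonoidWithZero M] {x : M}
    (hx : IsUnit x) (y : M) {k : ℕ} (hk : k ≠ 0) :
    x ^ (k - 1) * y ^ k = Ring.inverse x * (x * y) ^ k := by
  obtain ⟨m, rfl⟩ := Nat.exists_eq_succ_of_ne_zero hk
  rw [Nat.succ_sub_one, mul_pow, pow_succ' x, mul_assoc, Ring.inverse_mul_cancel_left _ _ hx]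

namespace PowerSeries

variable {R : Type*} [CommRing R]

theorem isUnit_one_sub_X_pow {k : ℕ} (hk : k ≠ 0) : IsUnit (1 - X ^ k : R⟦X⟧) := by
  simp [isUnit_iff_constantCoeff, hk]

theorem evalNegHom_one_sub_X_pow_two_mul (k : ℕ) :
    evalNegHom (1 - X ^ (2 * k) : R⟦X⟧) = 1 - X ^ (2 * k) := by
  rw [map_sub, map_one, map_pow, evalNegHom_X, (even_two_mul k).neg_pow]

theorem evalNegHom_evalNegHom (f : R⟦X⟧) : evalNegHom (evalNegHom f) = f := by
  rw [evalNegHom, rescale_rescale, neg_one_mul, neg_neg, rescale_one, RingHom.id_apply]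

theorem two_dvd_sub_evalNegHom (f : R⟦X⟧) : (2 : R⟦X⟧) ∣ f - evalNegHom f := by
  refine ⟨mk fun n => if Even n then 0 else coeff n f, ?_⟩
  ext n
  rw [← map_ofNat C 2, coeff_C_mul, coeff_mk, map_sub, evalNegHom, coeff_rescale]
  rcases n.even_or_odd with hn | hn
  · rw [hn.neg_one_pow, if_pos hn]
    ring
  · rw [hn.neg_one_pow, if_neg (Nat.not_even_iff_odd.mpr hn)]
    ring

theorem exists_evalNegHom_eq_and_two_pow_dvd_pow_two_pow_sub (f : R⟦X⟧) :
    ∀ r : ℕ, ∃ g : R⟦X⟧, evalNegHom g = g ∧ (2 : R⟦X⟧) ^ r ∣ f ^ 2 ^ r - g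
  | 0 => ⟨0, map_zero _, by simp⟩
  | s + 1 => by
    refine ⟨(f * evalNegHom f) ^ 2 ^ s, ?_, ?_⟩
    · rw [map_pow, map_mul, evalNegHom_evalNegHom, mul_comm]
    · have h : ((2 : ℕ) : R⟦X⟧) ∣ f ^ 2 - f * evalNegHom f := by
        rw [sq, ← mul_sub]
        exact_mod_cast dvd_mul_of_dvd_right (two_dvd_sub_evalNegHom f) f
      rw [pow_succ' (2 : ℕ) s, pow_mul]
      exact_mod_cast dvd_sub_pow_of_dvd_sub h s

theorem coeff_eq_zero_of_evalNegHom_eq [NoZeroDivisors R] [CharZero R] {f : R⟦X⟧}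
    (hf : evalNegHom f = f) {n : ℕ} (hn : Odd n) : coeff n f = 0 := by
  have h := congrArg (coeff n) hf
  rwa [evalNegHom, coeff_rescale, hn.neg_one_pow, neg_one_mul, CharZero.neg_eq_self_iff] at h

theorem dvd_coeff_of_C_dvd {a : R} {f : R⟦X⟧} (h : C a ∣ f) (n : ℕ) : a ∣ coeff n f := by
  obtain ⟨g, rfl⟩ := h
  rw [coeff_C_mul]
  exact dvd_mul_right a _

end PowerSeries

theorem a_pow_two_odd_cong (r n : ℕ) :
    ((2 : ℤ) ^ r) ∣ a (2 ^ r) (2 * n + 1) := by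
  set A : ℤ⟦X⟧ := ∏ i ∈ range (2 * n + 1 + 1), (1 - X ^ (2 * (i + 1)))
  set B : ℤ⟦X⟧ := ∏ i ∈ range (2 * n + 1 + 1), Ring.inverse (1 - X ^ (i + 1))
  have hA : IsUnit A := IsUnit.prod_iff.mpr fun i _ => isUnit_one_sub_X_pow (by omega)
  have hA_even : evalNegHom A = A := by
    simp only [A, map_prod, evalNegHom_one_sub_X_pow_two_mul]
  have hA_inv_even : evalNegHom (Ring.inverse A) = Ring.inverse A := by
    rw [map_ringInverse_of_isUnit _ hA, hA_even]
  obtain ⟨g, hg_even, hg⟩ := exists_evalNegHom_eq_and_two_pow_dvd_pow_two_pow_sub (A * B) r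
  have ha : a (2 ^ r) (2 * n + 1) =
      coeff (2 * n + 1) (Ring.inverse A * g + Ring.inverse A * ((A * B) ^ 2 ^ r - g)) := by
    rw [← mul_add, add_sub_cancel, ← pow_pred_mul_pow_eq_ringInverse_mul hA _ (by positivity), a,
      prod_pow, prod_pow]
  have h_even : evalNegHom (Ring.inverse A * g) = Ring.inverse A * g := by
    rw [map_mul, hA_inv_even, hg_even]
  rw [ha, map_add, coeff_eq_zero_of_evalNegHom_eq h_even (odd_two_mul_add_one n), zero_add]
  refine dvd_coeff_of_C_dvd (dvd_mul_of_dvd_right ?_ _) _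
  rwa [map_pow, map_ofNat]
end

section
/- For every prime p ∈ {7, 11, 13} and all integers n ≥ 0, a_3(pn + 6) ≡ 0 (mod 2). -/
open Finset PowerSeries

theorem Ring.map_inverse {M N F : Type*} [MonoidWithZero M] [MonoidWithZero N] [FunLike F M N]
    [MonoidHomClass F M N] (f : F) {u : M} (hu : IsUnit u) :
    f (Ring.inverse u) = Ring.inverse (f u) := by
  obtain ⟨v, rfl⟩ := hu
  rw [Ring.inverse_unit, ← one_mul (Ring.inverse (f v)),
    Ring.eq_mul_inverse_iff_mul_eq _ _ _ (v.isUnit.map f), ← map_mul, Units.inv_mul, map_one]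

theorem one_sub_sq_sq_mul_inverse_pow_three {R : Type*} [CommRing R] [CharP R 2] {x : R}
    (hx : IsUnit (1 - x)) : (1 - x ^ 2) ^ 2 * Ring.inverse (1 - x) ^ 3 = 1 - x := by
  have hfrob : 1 - x ^ 2 = (1 - x) ^ 2 := by rw [sub_pow_char, one_pow]
  rw [hfrob, ← pow_mul, show (1 - x) ^ (2 * 2) = (1 - x) * (1 - x) ^ 3 by ring, mul_assoc,
    ← mul_pow, Ring.mul_inverse_cancel _ hx, one_pow, mul_one]

theorem PowerSeries.isUnit_one_sub_X_pow_succ (R : Type*) [CommRing R] (i : ℕ) :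
    IsUnit (1 - X ^ (i + 1) : R⟦X⟧) := by
  simp [isUnit_iff_constantCoeff]

theorem PowerSeries.coeff_prod_eq_of_subset {ι R : Type*} [CommRing R] [DecidableEq ι]
    {s t : Finset ι} (hst : s ⊆ t) (f : ι → R⟦X⟧) {n : ℕ}
    (hf : ∀ i ∈ t \ s, X ^ (n + 1) ∣ f i - 1) :
    coeff n (∏ i ∈ t, f i) = coeff n (∏ i ∈ s, f i) := by
  have hdvd : X ^ (n + 1) ∣ ∏ i ∈ t \ s, f i - 1 := by
    refine prod_induction f (fun g ↦ X ^ (n + 1) ∣ g - 1) (fun g h hg hh ↦ ?_) (by simp) hf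
    rw [show g * h - 1 = (g - 1) * h + (h - 1) by ring]
    exact dvd_add (dvd_mul_of_dvd_left hg h) hh
  obtain ⟨c, hc⟩ := hdvd
  rw [← prod_sdiff hst, sub_eq_iff_eq_add.mp hc, add_mul, one_mul, map_add, mul_assoc,
    coeff_X_pow_mul', if_neg (by omega), zero_add]

theorem PowerSeries.coeff_prod_range_one_sub_X_pow (R : Type*) [CommRing R] (n : ℕ) :
    coeff n (∏ i ∈ range (n + 1), (1 - X ^ (i + 1) : R⟦X⟧)) = coeff n (pentagonalSeries R) := by
  obtain ⟨s, hs⟩ := Filter.eventually_atTop.1 (coeff_prod_one_sub_X_pow_eventually_eq R n)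
  rw [← hs (s ∪ range (n + 1)) subset_union_left, coeff_prod_eq_of_subset subset_union_right]
  intro i hi
  have hni : n < i := by simpa using (mem_sdiff.mp hi).2
  simpa using pow_dvd_pow (X : R⟦X⟧) (Nat.succ_le_succ hni.le)

theorem intCast_a_three_eq_coeff_pentagonalSeries (R : Type*) [CommRing R] [CharP R 2] (n : ℕ) :
    (a 3 n : R) = coeff n (pentagonalSeries R) := by
  have : CharP R⟦X⟧ 2 := charP_of_injective_ringHom C_injective 2
  rw [← coeff_prod_range_one_sub_X_pow, a, ← eq_intCast (Int.castRingHom R), ← coeff_map,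
    map_mul, map_prod, map_prod, ← prod_mul_distrib]
  congr 1
  refine prod_congr rfl fun i _ ↦ ?_
  rw [map_pow, map_pow, Ring.map_inverse _ (isUnit_one_sub_X_pow_succ ℤ i)]
  simp only [map_pow, map_sub, map_one, map_X]
  rw [pow_mul']
  exact one_sub_sq_sq_mul_inverse_pow_three (isUnit_one_sub_X_pow_succ R i)

theorem mul_add_notMem_range_pentagonal {p m : ℕ} (h : ∀ x : ZMod p, x * (3 * x - 1) ≠ 2 * m)
    (n : ℕ) : p * n + m ∉ Set.range pentagonal := by
  rintro ⟨k, hk⟩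
  apply h k
  have := congrArg (Int.cast : ℤ → ZMod p) (two_mul_natCast_pentagonal k)
  push_cast [hk] at this
  simpa using this.symm

theorem a_three_cong_mod_two_shift_six (p : ℕ)
    (hp : p ∈ ({7, 11, 13} : Finset ℕ)) (n : ℕ) :
    (2 : ℤ) ∣ a 3 (p * n + 6) := by
  have hpent : p * n + 6 ∉ Set.range pentagonal := by
    simp only [mem_insert, mem_singleton] at hp
    rcases hp with rfl | rfl | rfl <;> exact mul_add_notMem_range_pentagonal (by decide) n
  refine (ZMod.intCast_zmod_eq_zero_iff_dvd _ 2).mp ?_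
  rw [intCast_a_three_eq_coeff_pentagonalSeries]
  exact coeff_pentagonalSeries_eq_zero _ hpent
end

section
/- For every integer m ≥ 0 whose residue modulo 7 lies in {2, 4, 5}, the coefficient of q^m in the formal power series ∏_{n≥1} (1 − q^n)^3 over ℤ is even. (Equivalently, reducing Jacobi's identity (q;q)_∞^3 = Σ_{k≥0} (−1)^k (2k+1) q^{k(k+1)/2} modulo 2, every exponent with nonzero coefficient is congruent to 0, 1, 3 or 6 mod 7.) -/
/-- `eulerCubeCoeff m` is the coefficient of `q^m` in the formal power series
`∏_{n ≥ 1} (1 - q^n)^3` over `ℤ`, i.e. the cube of the Euler product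
`(q;q)_∞ = ∏_{n ≥ 1} (1 - q^n)`.  Since every factor with index `n > m` is of the
form `1 + O(q^{m+1})` and so does not affect the coefficient of `q^m`, the infinite
product may be truncated at `n = m + 1`. -/
noncomputable def eulerCubeCoeff (m : ℕ) : ℤ :=
  PowerSeries.coeff m
    ((∏ n ∈ Finset.range (m + 1),
        ((1 : PowerSeries ℤ) - (PowerSeries.X : PowerSeries ℤ) ^ (n + 1))) ^ 3)

/-!
By Jacobi's identity `(q;q)_∞^3 = ∑_k (-1)^k (2k+1) q^(k(k+1)/2)`, the coefficient of `q^m`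
vanishes unless `m` is triangular, and triangular numbers are `0, 1, 3, 6` modulo `7`.

Jacobi's identity comes from a finite form of the triple product. By the `q`-binomial theorem,
`∏_{i < 2M+2} (q^M + q^i z) = ∑_k q^(M(2M+2-k) + k(k-1)/2) [2M+2, k]_q z^k`. The factor `i = M`
vanishes at `z = -1`, so differentiating there gives
`(-1)^M (q;q)_M (q;q)_(M+1) = ∑_k k (-1)^(k-1) q^(t_k) [2M+2, k]_q`, up to a common power of `q`,
with every `t_k` triangular. Modulo `q^(m+1)` all `(q;q)_n` with `n ≥ m` agree, and
`[i+j, i]_q = (q;q)_(i+j) / ((q;q)_i (q;q)_j)` becomes their inverse when `i, j ≥ m`. Taking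
`M = 2m`, every term with `t_k ≤ m` has `k, 2M+2-k ≥ m`, so `(q;q)_m^3` is congruent to
`± ∑_k k (-1)^(k-1) q^(t_k)` modulo `q^(m+1)`.
-/

open Finset
open PowerSeries (X coeff)
open Polynomial (C eval derivative)
open scoped PowerSeries

namespace EulerCube

variable (R : Type*) [CommRing R]

-- The truncated `m - j` is harmless: for `j ≥ m` it multiplies `qBinom m j`, which is `0`
-- unless `j = m`.
noncomputable def qBinom : ℕ → ℕ → R⟦X⟧
  | _, 0 => 1
  | 0, _ + 1 => 0
  | m + 1, j + 1 => qBinom m (j + 1) + X ^ (m - j) * qBinom m j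

noncomputable def qPochhammer (n : ℕ) : R⟦X⟧ := ∏ i ∈ range n, (1 - X ^ (i + 1))

variable {R}

@[simp] lemma qBinom_zero_right (m : ℕ) : qBinom R m 0 = 1 := by cases m <;> rfl

lemma qBinom_succ_succ (m j : ℕ) :
    qBinom R (m + 1) (j + 1) = qBinom R m (j + 1) + X ^ (m - j) * qBinom R m j := rfl

lemma qBinom_eq_zero_of_lt {m j : ℕ} (h : m < j) : qBinom R m j = 0 := by
  induction m generalizing j with
  | zero => obtain ⟨j, rfl⟩ := Nat.exists_eq_succ_of_ne_zero (by omega : j ≠ 0); rfl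
  | succ m ih =>
    obtain ⟨j, rfl⟩ := Nat.exists_eq_succ_of_ne_zero (by omega : j ≠ 0)
    rw [qBinom_succ_succ, ih (by omega), ih (by omega), mul_zero, add_zero]

@[simp] lemma qBinom_self (m : ℕ) : qBinom R m m = 1 := by
  induction m with
  | zero => rfl
  | succ m ih => rw [qBinom_succ_succ, qBinom_eq_zero_of_lt m.lt_succ_self, ih, Nat.sub_self]; simp

lemma qPochhammer_succ (n : ℕ) : qPochhammer R (n + 1) = qPochhammer R n * (1 - X ^ (n + 1)) :=
  prod_range_succ _ _

lemma isUnit_qPochhammer (n : ℕ) : IsUnit (qPochhammer R n) := by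
  simp [PowerSeries.isUnit_iff_constantCoeff, qPochhammer]

lemma qPochhammer_mul_qPochhammer_mul_qBinom (j k : ℕ) :
    qPochhammer R j * qPochhammer R k * qBinom R (j + k) j = qPochhammer R (j + k) := by
  induction j generalizing k with
  | zero => simp [qPochhammer]
  | succ j ihj =>
    induction k with
    | zero => simp [qPochhammer]
    | succ k ihk =>
      have h := ihj (k + 1)
      rw [show j + (k + 1) = j + k + 1 by omega] at h
      rw [show j + 1 + k = j + k + 1 by omega] at ihk
      rw [show j + 1 + (k + 1) = j + k + 1 + 1 by omega, qBinom_succ_succ,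
        show j + k + 1 - j = k + 1 by omega]
      rw [qPochhammer_succ j] at ihk ⊢
      rw [qPochhammer_succ k] at h ⊢
      rw [qPochhammer_succ (j + k + 1)]
      linear_combination (1 - X ^ (k + 1)) * ihk + X ^ (k + 1) * (1 - X ^ (j + 1)) * h

lemma coeff_prod_C_add_C_X_pow_mul_X (a : R⟦X⟧) (n k : ℕ) :
    (∏ i ∈ range n, (C a + C (X ^ i) * Polynomial.X)).coeff k =
      a ^ (n - k) * X ^ k.choose 2 * qBinom R n k := by
  induction n generalizing k with
  | zero => cases k <;> simp [qBinom, Polynomial.coeff_one]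
  | succ n ih =>
    rw [prod_range_succ, mul_add, ← mul_assoc, Polynomial.coeff_add, Polynomial.coeff_mul_C]
    cases k with
    | zero => rw [Polynomial.coeff_mul_X_zero, ih]; simp [pow_succ]
    | succ j =>
      rw [Polynomial.coeff_mul_X, Polynomial.coeff_mul_C, ih, ih, qBinom_succ_succ,
        Nat.add_sub_add_right, Nat.choose_succ_succ', Nat.choose_one_right]
      rcases lt_trichotomy j n with h | rfl | h
      · obtain ⟨e, rfl⟩ : ∃ e, n = j + 1 + e := ⟨n - j - 1, by omega⟩
        rw [show j + 1 + e - (j + 1) = e by omega, show j + 1 + e - j = e + 1 by omega]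
        ring
      · rw [qBinom_eq_zero_of_lt j.lt_succ_self, qBinom_self, Nat.sub_self]
        ring
      · simp [qBinom_eq_zero_of_lt h, qBinom_eq_zero_of_lt (h.trans j.lt_succ_self)]

-- `k - (M + 1) + (M - k)` is the distance from `k` to the nearer of `M` and `M + 1`: one of the
-- two truncated differences is always `0`.
lemma mul_sub_add_choose_two_eq {M k : ℕ} (hk : k ≤ 2 * M + 2) :
    M * (2 * M + 2 - k) + k.choose 2 =
      M.choose 2 + M + M * (M + 1) + (k - (M + 1) + (M - k) + 1).choose 2 := by
  rcases le_or_gt (M + 1) k with h | h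
  · obtain ⟨d, rfl⟩ : ∃ d, k = M + 1 + d := ⟨k - (M + 1), by omega⟩
    rw [show 2 * M + 2 - (M + 1 + d) = M + 1 - d by omega,
      show M + 1 + d - (M + 1) + (M - (M + 1 + d)) = d by omega]
    have hd : d ≤ M + 1 := by omega
    qify [hd]
    simp only [Nat.cast_choose_two]
    push_cast
    ring
  · obtain ⟨d, rfl⟩ : ∃ d, M = k + d := ⟨M - k, by omega⟩
    rw [show 2 * (k + d) + 2 - k = k + 2 * d + 2 by omega,
      show k - (k + d + 1) + (k + d - k) = d by omega]
    qify
    simp only [Nat.cast_choose_two]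
    push_cast
    ring

lemma eval_derivative_prod_eq_mul_qPochhammer (M : ℕ) :
    eval (-1) (derivative (∏ i ∈ range (2 * M + 2), (C (X ^ M) + C (X ^ i) * Polynomial.X))) =
      (-1) ^ M * X ^ (M.choose 2 + M + M * (M + 1)) * qPochhammer R M *
        qPochhammer R (M + 1) := by
  set f : ℕ → Polynomial R⟦X⟧ := fun i ↦ C (X ^ M) + C (X ^ i) * Polynomial.X
  have hroot : eval (-1) (f M) = 0 := by simp [f]
  have hA : eval (-1) (∏ i ∈ range M, f i) = (-1) ^ M * X ^ M.choose 2 * qPochhammer R M := by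
    have hfactor : ∀ i ∈ range M, eval (-1) (f i) = -(X ^ i * (1 - X ^ (M - 1 - i + 1))) := by
      intro i hi
      have hM : (X : R⟦X⟧) ^ M = X ^ i * X ^ (M - 1 - i + 1) := by
        rw [← pow_add]; congr 1; simp at hi; omega
      simp only [f, hM, map_mul, map_pow, Polynomial.eval_add, Polynomial.eval_mul,
        Polynomial.eval_pow, Polynomial.eval_C, Polynomial.eval_X]
      ring
    rw [Polynomial.eval_prod, prod_congr rfl hfactor, prod_neg, prod_mul_distrib,
      prod_pow_eq_pow_sum, sum_range_id, ← Nat.choose_two_right,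
      prod_range_reflect (fun j ↦ 1 - X ^ (j + 1)), card_range, qPochhammer, mul_assoc]
  have hB : eval (-1) (∏ l ∈ range (M + 1), f (M + 1 + l)) =
      X ^ (M * (M + 1)) * qPochhammer R (M + 1) := by
    have hfactor :
        ∀ l ∈ range (M + 1), eval (-1) (f (M + 1 + l)) = X ^ M * (1 - X ^ (l + 1)) := by
      intro l _
      simp only [f, map_pow, Polynomial.eval_add, Polynomial.eval_pow, Polynomial.eval_C,
        Polynomial.eval_mul, Polynomial.eval_X]
      ring
    rw [Polynomial.eval_prod, prod_congr rfl hfactor, prod_mul_distrib, prod_const, card_range,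
      ← pow_mul, qPochhammer]
  have hf' : eval (-1) (derivative (f M)) = X ^ M := by simp [f]
  clear_value f
  rw [show 2 * M + 2 = (M + 1) + (M + 1) by ring, prod_range_add, prod_range_succ]
  simp only [Polynomial.derivative_mul, Polynomial.eval_add, Polynomial.eval_mul, hroot, hA, hB,
    hf']
  ring

lemma eval_derivative_prod_eq_sum (M : ℕ) :
    eval (-1) (derivative (∏ i ∈ range (2 * M + 2), (C (X ^ M) + C (X ^ i) * Polynomial.X))) =
      ∑ k ∈ range (2 * M + 3),
        PowerSeries.C ((k : R) * (-1) ^ (k - 1)) * X ^ (M * (2 * M + 2 - k) + k.choose 2) *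
          qBinom R (2 * M + 2) k := by
  set P : Polynomial R⟦X⟧ := ∏ i ∈ range (2 * M + 2), (C (X ^ M) + C (X ^ i) * Polynomial.X)
  have hcoeff := coeff_prod_C_add_C_X_pow_mul_X ((X : R⟦X⟧) ^ M) (2 * M + 2)
  have hdeg : P.natDegree < 2 * M + 3 := by
    refine Nat.lt_succ_of_le (Polynomial.natDegree_le_iff_coeff_eq_zero.mpr fun k hk ↦ ?_)
    rw [hcoeff, qBinom_eq_zero_of_lt hk, mul_zero]
  rw [Polynomial.derivative_eval, Polynomial.sum_over_range' _ (by simp) _ hdeg]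
  refine sum_congr rfl fun k _ ↦ ?_
  rw [hcoeff, ← pow_mul, pow_add]
  simp only [map_mul, map_natCast, map_pow, map_neg, map_one]
  ring

theorem neg_one_pow_mul_qPochhammer_mul_qPochhammer (M : ℕ) :
    (-1) ^ M * qPochhammer R M * qPochhammer R (M + 1) =
      ∑ k ∈ range (2 * M + 3), PowerSeries.C ((k : R) * (-1) ^ (k - 1)) *
        X ^ (k - (M + 1) + (M - k) + 1).choose 2 * qBinom R (2 * M + 2) k := by
  apply PowerSeries.X_pow_mul_cancel (k := M.choose 2 + M + M * (M + 1))
  calc _ = (-1) ^ M * X ^ (M.choose 2 + M + M * (M + 1)) * qPochhammer R M *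
        qPochhammer R (M + 1) := by ring
    _ = _ := (eval_derivative_prod_eq_mul_qPochhammer M).symm.trans (eval_derivative_prod_eq_sum M)
    _ = _ := by
      rw [mul_sum]
      refine sum_congr rfl fun k hk ↦ ?_
      rw [mul_sub_add_choose_two_eq (by simp at hk; omega), pow_add]
      ring

variable (R) in
noncomputable def reduceModXPow (m : ℕ) :
    R⟦X⟧ →+* R⟦X⟧ ⧸ Ideal.span {(X : R⟦X⟧) ^ (m + 1)} :=
  Ideal.Quotient.mk _

lemma reduceModXPow_X_pow {m e : ℕ} (h : m < e) : reduceModXPow R m (X ^ e) = 0 :=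
  Ideal.Quotient.eq_zero_iff_mem.mpr (Ideal.mem_span_singleton.mpr (pow_dvd_pow _ h))

lemma coeff_eq_of_reduceModXPow_eq {m : ℕ} {f g : R⟦X⟧}
    (h : reduceModXPow R m f = reduceModXPow R m g) : coeff m f = coeff m g := by
  have := PowerSeries.X_pow_dvd_iff.mp (Ideal.mem_span_singleton.mp (Ideal.Quotient.eq.mp h)) m
    (lt_add_one m)
  rwa [map_sub, sub_eq_zero] at this

lemma reduceModXPow_qPochhammer {m n : ℕ} (h : m ≤ n) :
    reduceModXPow R m (qPochhammer R n) = reduceModXPow R m (qPochhammer R m) := by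
  induction n, h using Nat.le_induction with
  | base => rfl
  | succ n _ ih =>
    rw [qPochhammer_succ, map_mul, map_sub, reduceModXPow_X_pow (by omega), ih, map_one,
      sub_zero, mul_one]

lemma reduceModXPow_qBinom_mul_qPochhammer {m j k : ℕ} (hj : m ≤ j) (hk : m ≤ k) :
    reduceModXPow R m (qBinom R (j + k) j) * reduceModXPow R m (qPochhammer R m) = 1 := by
  have h := congrArg (reduceModXPow R m) (qPochhammer_mul_qPochhammer_mul_qBinom (R := R) j k)
  rw [map_mul, map_mul, reduceModXPow_qPochhammer hj, reduceModXPow_qPochhammer hk,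
    reduceModXPow_qPochhammer (by omega : m ≤ j + k)] at h
  have hu := (isUnit_qPochhammer (R := R) m).map (reduceModXPow R m)
  apply hu.mul_left_cancel
  linear_combination h

theorem coeff_qPochhammer_pow_three_eq_zero {m n : ℕ} (hm : ∀ d, (d + 1).choose 2 ≠ m)
    (hn : m ≤ n) : coeff m (qPochhammer R n ^ 3) = 0 := by
  set π := reduceModXPow R m
  set M := 2 * m
  have hterm : ∀ k ∈ range (2 * M + 3),
      π (PowerSeries.C ((k : R) * (-1) ^ (k - 1)) * X ^ (k - (M + 1) + (M - k) + 1).choose 2 *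
        qBinom R (2 * M + 2) k) * π (qPochhammer R m) =
      π (PowerSeries.C ((k : R) * (-1) ^ (k - 1)) * X ^ (k - (M + 1) + (M - k) + 1).choose 2) := by
    intro k hk
    set d := k - (M + 1) + (M - k)
    by_cases hd : m < (d + 1).choose 2
    · rw [map_mul, map_mul, map_mul, reduceModXPow_X_pow hd, mul_zero, zero_mul, zero_mul]
    have hdm : d ≤ m := by
      rw [Nat.choose_succ_succ', Nat.choose_one_right] at hd
      omega
    have hunit := reduceModXPow_qBinom_mul_qPochhammer (R := R) (j := k) (k := 2 * M + 2 - k)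
      (m := m) (by omega) (by omega)
    rw [Nat.add_sub_cancel' (by simp at hk; omega)] at hunit
    rw [map_mul]
    linear_combination π (PowerSeries.C ((k : R) * (-1) ^ (k - 1)) *
      X ^ (d + 1).choose 2) * hunit
  have hreduce : π ((-1) ^ M * qPochhammer R n ^ 3) = π (∑ k ∈ range (2 * M + 3),
      PowerSeries.C ((k : R) * (-1) ^ (k - 1)) * X ^ (k - (M + 1) + (M - k) + 1).choose 2) := by
    calc π ((-1) ^ M * qPochhammer R n ^ 3)
        = π ((-1) ^ M * qPochhammer R M * qPochhammer R (M + 1)) * π (qPochhammer R m) := by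
          simp only [map_mul, map_pow, π, reduceModXPow_qPochhammer hn,
            reduceModXPow_qPochhammer (by omega : m ≤ M),
            reduceModXPow_qPochhammer (by omega : m ≤ M + 1)]
          ring
      _ = _ := by
        rw [neg_one_pow_mul_qPochhammer_mul_qPochhammer, map_sum, sum_mul, sum_congr rfl hterm,
          map_sum]
  have hcoeff := coeff_eq_of_reduceModXPow_eq hreduce
  have hm' : ∀ d, m ≠ (d + 1).choose 2 := fun d h ↦ hm d h.symm
  simp only [map_sum, PowerSeries.coeff_C_mul_X_pow, hm', if_false, sum_const_zero] at hcoeff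
  rcases neg_one_pow_eq_or R⟦X⟧ M with h | h <;> simpa [h] using hcoeff

lemma succ_choose_two_ne_of_mod_seven {m : ℕ} (hm : m % 7 = 2 ∨ m % 7 = 4 ∨ m % 7 = 5)
    (d : ℕ) : (d + 1).choose 2 ≠ m := by
  intro h
  have h2 : (d + 1) * d = 2 * m := by
    rw [← h, mul_comm 2, ← Nat.add_one_mul_choose_eq d 1, Nat.choose_one_right]
  have h7 : (d % 7 + 1) * (d % 7) % 7 = 2 * m % 7 := by rw [← h2, Nat.mul_mod, Nat.add_mod]; simp
  have : d % 7 < 7 := Nat.mod_lt d (by norm_num)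
  interval_cases d % 7 <;> omega

end EulerCube

open EulerCube in
theorem eulerCube_even_of_residue_mod_seven (m : ℕ)
    (hm : m % 7 = 2 ∨ m % 7 = 4 ∨ m % 7 = 5) :
    (2 : ℤ) ∣ eulerCubeCoeff m := by
  have h : eulerCubeCoeff m = PowerSeries.coeff m (qPochhammer ℤ (m + 1) ^ 3) := rfl
  rw [h, coeff_qPochhammer_pow_three_eq_zero (succ_choose_two_ne_of_mod_seven hm) m.le_succ]
  exact dvd_zero 2
end
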